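/- arXiv:1511.08905 — 3 statements merged into one kernel-verified Lean document; each statement's English description precedes it below -/
import Mathlib

section
/- Let g : R^n → R be convex and differentiable with L-Lipschitz gradient, and let x*, x^r, x^{r+1} ∈ R^n. Then ⟨x* − x^{r+1}, ∇g(x^r)⟩ ≤ (L/4)·‖x^r − x^{r+1}‖² + ⟨x* − x^{r+1}, ∇g(x*)⟩. -/
/-!
Two consequences of an `L`-Lipschitz gradient `G` of a convex `g` drive the argument: the descent
lemma `g y ≤ g x + ⟪G x, y - x⟫ + L/2 ‖y - x‖²` (monotonicity of a one-variable comparison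
function along the segment) and the first-order convexity inequality. Applying both at the point
`y - L⁻¹ (G y - G x)` and symmetrising gives cocoercivity, `L⁻¹ ‖G x - G y‖² ≤ ⟪x - y, G x - G y⟫`.
The claim then follows by splitting `⟪xs - xr1, G xr - G xs⟫` at `xr`: cocoercivity bounds the part
along `xs - xr` by `-L⁻¹ ‖G xr - G xs‖²`, and Young's inequality absorbs this into the part along
`xr - xr1`.
-/

open RealInnerProductSpace AffineMap Set

theorem real_inner_le_div_four_mul_norm_sq_add_inv_mul_norm_sq {F : Type*}
    [NormedAddCommGroup F] [InnerProductSpace ℝ F] {c : ℝ} (hc : 0 < c) (u v : F) :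
    ⟪u, v⟫ ≤ c / 4 * ‖u‖ ^ 2 + c⁻¹ * ‖v‖ ^ 2 :=
  calc ⟪u, v⟫ ≤ ‖u‖ * ‖v‖ := real_inner_le_norm u v
    _ ≤ c / 4 * ‖u‖ ^ 2 + c⁻¹ * ‖v‖ ^ 2 := by
      have hyoung := two_mul_le_add_mul_sq (a := ‖u‖) (b := ‖v‖) (half_pos hc)
      rw [inv_div, div_eq_mul_inv 2 c] at hyoung
      linarith

section Gradient

variable {E : Type*} [NormedAddCommGroup E] [InnerProductSpace ℝ E] [CompleteSpace E]
  {g : E → ℝ} {g' x y : E} {t : ℝ}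

theorem HasGradientAt.hasDerivAt_comp_lineMap (h : HasGradientAt g g' (lineMap x y t)) :
    HasDerivAt (g ∘ lineMap x y) ⟪g', y - x⟫ t := by
  simpa [InnerProductSpace.toDual_apply_apply] using
    h.hasFDerivAt.comp_hasDerivAt t hasDerivAt_lineMap

theorem ConvexOn.inner_gradient_le_sub {s : Set E} (hg : ConvexOn ℝ s g) (hx : x ∈ s) (hy : y ∈ s)
    (h : HasGradientAt g g' x) : ⟪g', y - x⟫ ≤ g y - g x := by
  have := (hg.comp_affineMap (lineMap x y)).le_slope_of_hasDerivAt (x := 0) (y := 1)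
    (by simpa) (by simpa) zero_lt_one (HasGradientAt.hasDerivAt_comp_lineMap (by simpa))
  simpa [slope] using this

theorem sub_le_inner_add_of_lipschitz_gradient {G : E → E} {L : ℝ}
    (hgrad : ∀ x, HasGradientAt g (G x) x) (hlip : ∀ x y, ‖G x - G y‖ ≤ L * ‖x - y‖) (x y : E) :
    g y - g x ≤ ⟪G x, y - x⟫ + L / 2 * ‖y - x‖ ^ 2 := by
  set φ : ℝ → ℝ := fun t ↦ g (lineMap x y t) - t * ⟪G x, y - x⟫ - L / 2 * t ^ 2 * ‖y - x‖ ^ 2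
  have hφ : ∀ t, HasDerivAt φ
      (⟪G (lineMap x y t), y - x⟫ - ⟪G x, y - x⟫ - L * t * ‖y - x‖ ^ 2) t := fun t ↦ by
    have := (((hgrad (lineMap x y t)).hasDerivAt_comp_lineMap).sub
      ((hasDerivAt_id t).mul_const ⟪G x, y - x⟫)).sub
      (((hasDerivAt_pow 2 t).const_mul (L / 2)).mul_const (‖y - x‖ ^ 2))
    exact this.congr_deriv (by ring)
  have hderiv_nonpos : ∀ t ∈ interior (Ici (0 : ℝ)),
      ⟪G (lineMap x y t), y - x⟫ - ⟪G x, y - x⟫ - L * t * ‖y - x‖ ^ 2 ≤ 0 := by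
    intro t ht
    rw [interior_Ici] at ht
    rw [sub_nonpos]
    have hdist : ‖lineMap x y t - x‖ = t * ‖y - x‖ := by
      rw [← vsub_eq_sub, lineMap_vsub_left, vsub_eq_sub, norm_smul, Real.norm_of_nonneg ht.out.le]
    calc ⟪G (lineMap x y t), y - x⟫ - ⟪G x, y - x⟫
        = ⟪G (lineMap x y t) - G x, y - x⟫ := (inner_sub_left _ _ _).symm
      _ ≤ ‖G (lineMap x y t) - G x‖ * ‖y - x‖ := real_inner_le_norm _ _
      _ ≤ L * ‖lineMap x y t - x‖ * ‖y - x‖ := by gcongr; exact hlip _ _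
      _ = L * t * ‖y - x‖ ^ 2 := by rw [hdist]; ring
  have hanti : AntitoneOn φ (Ici 0) :=
    antitoneOn_of_hasDerivWithinAt_nonpos (convex_Ici 0)
      (fun t _ ↦ (hφ t).continuousAt.continuousWithinAt)
      (fun t _ ↦ (hφ t).hasDerivWithinAt) hderiv_nonpos
  have hφ10 := hanti self_mem_Ici (by simp : (1 : ℝ) ∈ Ici 0) zero_le_one
  simp only [φ, lineMap_apply_one, lineMap_apply_zero] at hφ10
  linarith

theorem ConvexOn.add_inner_add_inv_mul_norm_sq_le {G : E → E} {L : ℝ}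
    (hg : ConvexOn ℝ univ g) (hL : 0 < L) (hgrad : ∀ x, HasGradientAt g (G x) x)
    (hlip : ∀ x y, ‖G x - G y‖ ≤ L * ‖x - y‖) (x y : E) :
    g x + ⟪G x, y - x⟫ + (2 * L)⁻¹ * ‖G y - G x‖ ^ 2 ≤ g y := by
  set d := G y - G x
  -- a gradient step from `y`, where the descent lemma at `y` meets the tangent plane at `x`
  set w := y - L⁻¹ • d
  have hbelow := hg.inner_gradient_le_sub (mem_univ x) (mem_univ w) (hgrad x)
  have habove := sub_le_inner_add_of_lipschitz_gradient hgrad hlip y w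
  have hwx : ⟪G x, w - x⟫ = ⟪G x, y - x⟫ - L⁻¹ * ⟪G x, d⟫ := by
    rw [show w - x = (y - x) - L⁻¹ • d by simp only [w]; abel, inner_sub_right,
      real_inner_smul_right]
  have hwy : ⟪G y, w - y⟫ = -(L⁻¹ * ⟪G y, d⟫) := by
    rw [show w - y = -(L⁻¹ • d) by simp only [w]; abel, inner_neg_right, real_inner_smul_right]
  have hnorm : ‖w - y‖ ^ 2 = L⁻¹ ^ 2 * ‖d‖ ^ 2 := by
    rw [show w - y = -(L⁻¹ • d) by simp only [w]; abel, norm_neg, norm_smul, mul_pow,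
      Real.norm_of_nonneg (inv_nonneg.mpr hL.le)]
  have hd : L⁻¹ * ⟪G y, d⟫ - L⁻¹ * ⟪G x, d⟫ = L⁻¹ * ‖d‖ ^ 2 := by
    rw [← mul_sub, ← inner_sub_left, real_inner_self_eq_norm_sq]
  have hcoef : L / 2 * (L⁻¹ ^ 2 * ‖d‖ ^ 2) = L⁻¹ * ‖d‖ ^ 2 - (2 * L)⁻¹ * ‖d‖ ^ 2 := by
    field_simp; ring
  rw [hwx] at hbelow
  rw [hwy, hnorm, hcoef] at habove
  linarith

theorem ConvexOn.inv_mul_norm_sq_le_inner_of_lipschitz_gradient {G : E → E} {L : ℝ}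
    (hg : ConvexOn ℝ univ g) (hL : 0 < L) (hgrad : ∀ x, HasGradientAt g (G x) x)
    (hlip : ∀ x y, ‖G x - G y‖ ≤ L * ‖x - y‖) (x y : E) :
    L⁻¹ * ‖G x - G y‖ ^ 2 ≤ ⟪x - y, G x - G y⟫ := by
  have hxy := hg.add_inner_add_inv_mul_norm_sq_le hL hgrad hlip x y
  have hyx := hg.add_inner_add_inv_mul_norm_sq_le hL hgrad hlip y x
  have hinner : ⟪G x, y - x⟫ + ⟪G y, x - y⟫ = -⟪x - y, G x - G y⟫ := by
    simp only [inner_sub_left, inner_sub_right, real_inner_comm x, real_inner_comm y]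
    ring
  have hcoef : L⁻¹ = (2 * L)⁻¹ + (2 * L)⁻¹ := by field_simp; norm_num
  rw [norm_sub_rev (G y)] at hxy
  rw [hcoef]
  linarith

end Gradient

theorem stmt6 {n : ℕ} (g : EuclideanSpace ℝ (Fin n) → ℝ)
    (G : EuclideanSpace ℝ (Fin n) → EuclideanSpace ℝ (Fin n))
    (L : ℝ) (hL : 0 < L)
    (hconv : ConvexOn ℝ Set.univ g)
    (hgrad : ∀ x, HasGradientAt g (G x) x)
    (hlip : ∀ x y, ‖G x - G y‖ ≤ L * ‖x - y‖)
    (xs xr xr1 : EuclideanSpace ℝ (Fin n)) :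
    ⟪xs - xr1, G xr⟫ ≤ L / 4 * ‖xr - xr1‖ ^ 2 + ⟪xs - xr1, G xs⟫ := by
  have hsplit : ⟪xs - xr1, G xr⟫ - ⟪xs - xr1, G xs⟫
      = -⟪xr - xs, G xr - G xs⟫ + ⟪xr - xr1, G xr - G xs⟫ := by
    rw [← inner_sub_right, ← inner_neg_left, ← inner_add_left, neg_sub]
    congr 1
    abel
  have hcoco := hconv.inv_mul_norm_sq_le_inner_of_lipschitz_gradient hL hgrad hlip xr xs
  have hyoung := real_inner_le_div_four_mul_norm_sq_add_inv_mul_norm_sq hL (xr - xr1) (G xr - G xs)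
  linarith
end

section
/- Let f : R^n → R be convex, let F : R^{n+m+p} → R^{n+m+p} be the affine map F(x,z,λ) = (Aᵀλ, Bᵀλ, −(Ax+Bz)) and let w* = (x*,z*,λ*) with Ax*+Bz*=0. If for points w^1,...,w^{r+1} the inequality f(x*) − f(x^t) + ⟨w̃ − w^t, F(w^t)⟩ ≥ c_t holds for t=1,...,r+1 (with w̃ = (x*,z*,λ) for some fixed λ and reals c_t), then for the average w̄ = (1/(r+1))∑_{t=1}^{r+1} w^t one has f(x*) − f(x̄) + ⟨w̃ − w̄, F(w̄)⟩ ≥ (1/(r+1))∑_{t=1}^{r+1} c_t. -/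
/-!
On the feasible set the λ-parts of `⟨w̃ - w, F(w)⟩` cancel by skew-symmetry of `F`, leaving
`-⟨λ̃, Ax + Bz⟩`, which is linear in `w`. Hence `w ↦ f(x*) - f(x) + ⟨w̃ - w, F(w)⟩` is concave,
and Jensen's inequality for the uniform weights `1/(r+1)` passes the lower bounds `c_t` to the
average.
-/

open Matrix

open Finset in
theorem ConcaveOn.inv_card_mul_sum_le_map_average {E ι : Type*} [AddCommGroup E] [Module ℝ E]
    {g : E → ℝ} (hg : ConcaveOn ℝ Set.univ g) {s : Finset ι} (hs : s.Nonempty)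
    {c : ι → ℝ} {w : ι → E} (hc : ∀ t ∈ s, c t ≤ g (w t)) :
    (#s : ℝ)⁻¹ * ∑ t ∈ s, c t ≤ g ((#s : ℝ)⁻¹ • ∑ t ∈ s, w t) := by
  have hweights : ∑ _t ∈ s, (#s : ℝ)⁻¹ = 1 := by
    rw [sum_const, nsmul_eq_mul, mul_inv_cancel₀ (by exact_mod_cast hs.card_ne_zero)]
  calc (#s : ℝ)⁻¹ * ∑ t ∈ s, c t
      ≤ ∑ t ∈ s, (#s : ℝ)⁻¹ • g (w t) := by
        simp only [mul_sum, smul_eq_mul]; gcongr with t ht; exact hc t ht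
    _ ≤ g (∑ t ∈ s, (#s : ℝ)⁻¹ • w t) :=
        hg.le_map_sum (fun _ _ ↦ by positivity) hweights (fun _ _ ↦ Set.mem_univ _)
    _ = g ((#s : ℝ)⁻¹ • ∑ t ∈ s, w t) := by rw [smul_sum]

theorem skew_pairing_eq_neg_dotProduct_residual {R ι κ μ : Type*} [CommRing R]
    [Fintype ι] [Fintype κ] [Fintype μ] (A : Matrix μ ι R) (B : Matrix μ κ R)
    {xs : ι → R} {zs : κ → R} (hfeas : A *ᵥ xs + B *ᵥ zs = 0) (lfix : μ → R)
    (x : ι → R) (z : κ → R) (l : μ → R) :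
    (xs - x) ⬝ᵥ Aᵀ *ᵥ l + (zs - z) ⬝ᵥ Bᵀ *ᵥ l + (lfix - l) ⬝ᵥ (-(A *ᵥ x + B *ᵥ z))
      = -(lfix ⬝ᵥ (A *ᵥ x + B *ᵥ z)) := by
  -- both `l`-terms become `l ⬝ᵥ (A *ᵥ · + B *ᵥ ·)`, and `l ⬝ᵥ (A *ᵥ xs + B *ᵥ zs) = 0`
  rw [dotProduct_transpose_mulVec, dotProduct_transpose_mulVec, mulVec_sub, mulVec_sub,
    ← dotProduct_add, sub_add_sub_comm, hfeas, zero_sub, sub_dotProduct]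
  simp only [dotProduct_neg]
  ring

theorem concaveOn_sub_sub_dotProduct {n₁ n₂ m : Type*} [Fintype n₁] [Fintype n₂] [Fintype m]
    {f : (n₁ → ℝ) → ℝ} (hf : ConvexOn ℝ Set.univ f) (a : ℝ)
    (A : Matrix m n₁ ℝ) (B : Matrix m n₂ ℝ) (v : m → ℝ) :
    ConcaveOn ℝ Set.univ fun w : (n₁ → ℝ) × (n₂ → ℝ) ↦ a - f w.1 - v ⬝ᵥ (A *ᵥ w.1 + B *ᵥ w.2) :=
  ((concaveOn_const a convex_univ).sub (hf.comp_linearMap (LinearMap.fst ℝ _ _))).sub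
    ((dotProductBilin ℝ ℝ v ∘ₗ A.mulVecLin.coprod B.mulVecLin).convexOn convex_univ)

theorem stmt14 {n1 n2 m : ℕ} (f : (Fin n1 → ℝ) → ℝ) (hf : ConvexOn ℝ Set.univ f)
    (A : Matrix (Fin m) (Fin n1) ℝ) (B : Matrix (Fin m) (Fin n2) ℝ)
    (xs : Fin n1 → ℝ) (zs : Fin n2 → ℝ) (lfix : Fin m → ℝ)
    (hfeas : A.mulVec xs + B.mulVec zs = 0)
    (r : ℕ) (x : ℕ → Fin n1 → ℝ) (z : ℕ → Fin n2 → ℝ) (l : ℕ → Fin m → ℝ) (c : ℕ → ℝ)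
    (hstep : ∀ t ∈ Finset.Icc 1 (r + 1),
      c t ≤ f xs - f (x t)
        + ((xs - x t) ⬝ᵥ Aᵀ.mulVec (l t) + (zs - z t) ⬝ᵥ Bᵀ.mulVec (l t)
          + (lfix - l t) ⬝ᵥ (-(A.mulVec (x t) + B.mulVec (z t))))) :
    ((r : ℝ) + 1)⁻¹ * ∑ t ∈ Finset.Icc 1 (r + 1), c t ≤
      f xs - f (((r : ℝ) + 1)⁻¹ • ∑ t ∈ Finset.Icc 1 (r + 1), x t)
        + ((xs - ((r : ℝ) + 1)⁻¹ • ∑ t ∈ Finset.Icc 1 (r + 1), x t) ⬝ᵥ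
              Aᵀ.mulVec (((r : ℝ) + 1)⁻¹ • ∑ t ∈ Finset.Icc 1 (r + 1), l t)
          + (zs - ((r : ℝ) + 1)⁻¹ • ∑ t ∈ Finset.Icc 1 (r + 1), z t) ⬝ᵥ
              Bᵀ.mulVec (((r : ℝ) + 1)⁻¹ • ∑ t ∈ Finset.Icc 1 (r + 1), l t)
          + (lfix - ((r : ℝ) + 1)⁻¹ • ∑ t ∈ Finset.Icc 1 (r + 1), l t) ⬝ᵥ
              (-(A.mulVec (((r : ℝ) + 1)⁻¹ • ∑ t ∈ Finset.Icc 1 (r + 1), x t)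
                + B.mulVec (((r : ℝ) + 1)⁻¹ • ∑ t ∈ Finset.Icc 1 (r + 1), z t)))) := by
  have hcard : ((Finset.Icc 1 (r + 1)).card : ℝ) = r + 1 := by simp
  have hgap := (concaveOn_sub_sub_dotProduct hf (f xs) A B lfix).inv_card_mul_sum_le_map_average
    (Finset.nonempty_Icc.2 (Nat.le_add_left 1 r)) (w := fun t ↦ (x t, z t)) (c := c)
    fun t ht ↦ by
      simpa only [skew_pairing_eq_neg_dotProduct_residual A B hfeas, ← sub_eq_add_neg] using hstep t ht
  rw [skew_pairing_eq_neg_dotProduct_residual A B hfeas, ← sub_eq_add_neg, ← hcard]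
  simpa [Prod.fst_sum, Prod.snd_sum] using hgap
end

section
/- Let g : R^n → R be convex differentiable with L-Lipschitz gradient, let ν ∈ (0,1], and let x^{ag}, x_old^{ag}, x, x_old, x*, x^{md} ∈ R^n satisfy x^{md} = (1−ν)·x_old^{ag} + ν·x_old and x^{ag} = (1−ν)·x_old^{ag} + ν·x. Then g(x^{ag}) − (1−ν)·g(x_old^{ag}) ≤ ν·g(x*) + ν·⟨∇g(x^{md}), x − x*⟩ + (ν²L/2)·‖x − x_old‖². -/
open RealInnerProductSpace AffineMap

/-!
The step `x^{ag} - x^{md} = ν (x - x_old)` turns the descent lemma at `x^{md}` into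
`g(x^{ag}) ≤ g(x^{md}) + ν ⟪∇g(x^{md}), x - x_old⟫ + ν² L/2 ‖x - x_old‖²`.
Averaging the first-order convexity bounds at `x^{md}` towards `x_old^{ag}` and `x*` with
weights `1 - ν` and `ν` gives `g(x^{md}) + ν ⟪∇g(x^{md}), x* - x_old⟫ ≤ (1-ν) g(x_old^{ag}) + ν g(x*)`,
because `(1-ν) x_old^{ag} + ν x* - x^{md} = ν (x* - x_old)`; adding the two yields the claim.
-/

section GradientAlongLine

variable {E : Type*} [NormedAddCommGroup E] [InnerProductSpace ℝ E] [CompleteSpace E]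
  {g : E → ℝ}

theorem HasGradientAt.hasDerivAt_comp_lineMap_s19 {x y : E} {t : ℝ} {G' : E}
    (hg : HasGradientAt g G' (lineMap x y t)) :
    HasDerivAt (fun s : ℝ => g (lineMap x y s)) ⟪G', y - x⟫ t :=
  hg.hasFDerivAt.comp_hasDerivAt t hasDerivAt_lineMap

theorem ConvexOn.add_inner_le_of_hasGradientAt (hconv : ConvexOn ℝ Set.univ g) {x G' : E}
    (hg : HasGradientAt g G' x) (y : E) :
    g x + ⟪G', y - x⟫ ≤ g y := by
  have hline : ConvexOn ℝ Set.univ (fun s : ℝ => g (lineMap x y s)) :=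
    hconv.comp_affineMap (lineMap x y)
  have hderiv : HasDerivAt (fun s : ℝ => g (lineMap x y s)) ⟪G', y - x⟫ 0 :=
    HasGradientAt.hasDerivAt_comp_lineMap_s19 (by simpa using hg)
  have hslope := hline.le_slope_of_hasDerivAt (Set.mem_univ 0) (Set.mem_univ 1) one_pos hderiv
  simp only [slope_def_field, lineMap_apply_one, lineMap_apply_zero, sub_zero, div_one] at hslope
  linarith

theorem le_add_inner_add_of_norm_sub_gradient_le {G : E → E} {L : ℝ}
    (hgrad : ∀ z, HasGradientAt g (G z) z) {x : E}
    (hlip : ∀ z, ‖G z - G x‖ ≤ L * ‖z - x‖) (y : E) :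
    g y ≤ g x + ⟪G x, y - x⟫ + L / 2 * ‖y - x‖ ^ 2 := by
  set v := y - x
  -- The gap between `g` and its quadratic upper model along the segment has nonpositive slope.
  set φ : ℝ → ℝ := fun t => g (lineMap x y t) - t * ⟪G x, v⟫ - L / 2 * ‖v‖ ^ 2 * t ^ 2
  set φ' : ℝ → ℝ := fun t => ⟪G (lineMap x y t), v⟫ - ⟪G x, v⟫ - L / 2 * ‖v‖ ^ 2 * (2 * t)
  have hφ : ∀ t, HasDerivAt φ (φ' t) t := fun t =>
    (((hgrad _).hasDerivAt_comp_lineMap_s19).sub ((hasDerivAt_id t).mul_const _ |>.congr_deriv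
      (one_mul _))).sub ((hasDerivAt_pow 2 t).const_mul _ |>.congr_deriv (by ring))
  have hφ'_nonpos : ∀ t ∈ interior (Set.Ici (0 : ℝ)), φ' t ≤ 0 := by
    intro t ht
    rw [interior_Ici, Set.mem_Ioi] at ht
    have hdist : ‖lineMap x y t - x‖ = t * ‖v‖ := by
      rw [← dist_eq_norm, dist_lineMap_left, Real.norm_of_nonneg ht.le, dist_comm, dist_eq_norm]
    have hcs : ⟪G (lineMap x y t) - G x, v⟫ ≤ L * (t * ‖v‖) * ‖v‖ :=
      (real_inner_le_norm _ _).trans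
        (mul_le_mul_of_nonneg_right (hdist ▸ hlip _) (norm_nonneg v))
    simp only [φ', ← inner_sub_left]
    linarith
  have hanti : AntitoneOn φ (Set.Ici 0) :=
    antitoneOn_of_hasDerivWithinAt_nonpos (convex_Ici 0)
      (fun t _ => (hφ t).continuousAt.continuousWithinAt)
      (fun t _ => (hφ t).hasDerivWithinAt) hφ'_nonpos
  have h01 := hanti Set.self_mem_Ici (Set.mem_Ici.mpr zero_le_one) zero_le_one
  simp only [φ, lineMap_apply_one, lineMap_apply_zero] at h01
  linarith

end GradientAlongLine

theorem stmt19_general {E : Type*} [NormedAddCommGroup E] [InnerProductSpace ℝ E] [CompleteSpace E]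
    (g : E → ℝ) (G : E → E) (L : ℝ)
    (hconv : ConvexOn ℝ Set.univ g)
    (hgrad : ∀ x, HasGradientAt g (G x) x)
    (hlip : ∀ x y, ‖G x - G y‖ ≤ L * ‖x - y‖)
    (ν : ℝ) (hν : ν ∈ Set.Ioc (0 : ℝ) 1)
    (xag xagold xcur xold xs xmd : E)
    (hmd : xmd = (1 - ν) • xagold + ν • xold)
    (hag : xag = (1 - ν) • xagold + ν • xcur) :
    g xag - (1 - ν) * g xagold
      ≤ ν * g xs + ν * ⟪G xmd, xcur - xs⟫ + ν ^ 2 * L / 2 * ‖xcur - xold‖ ^ 2 := by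
  obtain ⟨hν0, hν1⟩ := hν
  have hstep : xag - xmd = ν • (xcur - xold) := by rw [hag, hmd]; module
  have hdesc := le_add_inner_add_of_norm_sub_gradient_le hgrad (fun z => hlip z xmd) xag
  rw [hstep, real_inner_smul_right, norm_smul, Real.norm_of_nonneg hν0.le, mul_pow] at hdesc
  have hag_lower := hconv.add_inner_le_of_hasGradientAt (hgrad xmd) xagold
  have hs_lower := hconv.add_inner_le_of_hasGradientAt (hgrad xmd) xs
  have hdir : (1 - ν) • (xagold - xmd) + ν • (xs - xmd) = ν • (xs - xold) := by
    rw [hmd]; module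
  have hmix : g xmd + ν * ⟪G xmd, xs - xold⟫ ≤ (1 - ν) * g xagold + ν * g xs := by
    rw [← real_inner_smul_right, ← hdir, inner_add_right, real_inner_smul_right,
      real_inner_smul_right]
    linarith [mul_le_mul_of_nonneg_left hag_lower (sub_nonneg.mpr hν1),
      mul_le_mul_of_nonneg_left hs_lower hν0.le]
  have hsplit : ⟪G xmd, xcur - xold⟫ = ⟪G xmd, xcur - xs⟫ + ⟪G xmd, xs - xold⟫ := by
    rw [← inner_add_right, sub_add_sub_cancel]
  rw [hsplit] at hdesc
  linarith

theorem stmt19 {E : Type*} [NormedAddCommGroup E] [InnerProductSpace ℝ E] [CompleteSpace E]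
    (g : E → ℝ) (G : E → E) (L : ℝ) (hL : 0 < L)
    (hconv : ConvexOn ℝ Set.univ g)
    (hgrad : ∀ x, HasGradientAt g (G x) x)
    (hlip : ∀ x y, ‖G x - G y‖ ≤ L * ‖x - y‖)
    (ν : ℝ) (hν : ν ∈ Set.Ioc (0 : ℝ) 1)
    (xag xagold xcur xold xs xmd : E)
    (hmd : xmd = (1 - ν) • xagold + ν • xold)
    (hag : xag = (1 - ν) • xagold + ν • xcur) :
    g xag - (1 - ν) * g xagold
      ≤ ν * g xs + ν * ⟪G xmd, xcur - xs⟫ + ν ^ 2 * L / 2 * ‖xcur - xold‖ ^ 2 :=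
  stmt19_general g G L hconv hgrad hlip ν hν xag xagold xcur xold xs xmd hmd hag
end
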